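/- Let ω = e^{2πi/3}. For every k ∈ ℂ with k ≠ 0, the matrix P(k) is invertible if and only if k⁶ ≠ 1; equivalently, det P(k) = 0 if and only if k is one of the sixth roots of unity ϰ_j = e^{πi(j-1)/3}, j = 1, …, 6. -/
import Mathlib


open Complex

/-- The primitive cube root of unity `ω = e^{2πi/3}`. -/
noncomputable def ω : ℂ := Complex.exp (2 * Real.pi * Complex.I / 3)

/-- `l_j(k) = (1/√3)(ω^j k + 1/(ω^j k))`. -/
noncomputable def lfun (j : ℕ) (k : ℂ) : ℂ :=
  (1 / (Real.sqrt 3 : ℂ)) * (ω ^ j * k + 1 / (ω ^ j * k))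

/-- `λ(k) = (1/(3√3))(k³ + 1/k³)`. -/
noncomputable def lamfun (k : ℂ) : ℂ :=
  (1 / (3 * (Real.sqrt 3 : ℂ))) * (k ^ 3 + 1 / k ^ 3)

/-- `z_j(k) = √3 ((ω^j k)² + (ω^j k)⁻²)/(k³ + k⁻³)`. -/
noncomputable def zfun (j : ℕ) (k : ℂ) : ℂ :=
  (Real.sqrt 3 : ℂ) * ((ω ^ j * k) ^ 2 + ((ω ^ j * k) ^ 2)⁻¹) / (k ^ 3 + (k ^ 3)⁻¹)

/-- The matrix `P(k)` with rows `(1,1,1)`, `(l₁,l₂,l₃)`, `(l₁²,l₂²,l₃²)`. -/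
noncomputable def Pmat (k : ℂ) : Matrix (Fin 3) (Fin 3) ℂ :=
  !![1, 1, 1;
     lfun 1 k, lfun 2 k, lfun 3 k;
     (lfun 1 k) ^ 2, (lfun 2 k) ^ 2, (lfun 3 k) ^ 2]

lemma hprim : IsPrimitiveRoot ω 3 := by
  have := Complex.isPrimitiveRoot_exp 3 (by norm_num)
  simpa [ω] using this

lemma hω3 : ω ^ 3 = 1 := hprim.pow_eq_one

lemma hω0 : ω ≠ 0 := hprim.ne_zero (by norm_num)

lemma hω1 : ω ≠ 1 := hprim.ne_one (by norm_num)

lemma hω2ne1 : ω ^ 2 ≠ 1 := by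
  intro h
  have h' : ω ^ 2 = ω ^ 0 := by simpa using h
  have := hprim.pow_inj (by norm_num) (by norm_num) h'
  norm_num at this

lemma hω2neω : ω ^ 2 ≠ ω := by
  intro h
  have h' : ω ^ 2 = ω ^ 1 := by simpa using h
  have := hprim.pow_inj (by norm_num) (by norm_num) h'
  norm_num at this

lemma hsum : ω ^ 2 + ω + 1 = 0 := by
  have h : (ω - 1) * (ω ^ 2 + ω + 1) = 0 := by linear_combination hω3
  rcases mul_eq_zero.1 h with h1 | h2
  · exact (hω1 (sub_eq_zero.1 h1)).elim
  · exact h2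

lemma hs0 : ((Real.sqrt 3 : ℝ) : ℂ) ≠ 0 := by
  simp only [ne_eq, Complex.ofReal_eq_zero]
  positivity

lemma lfun_sub (a b : ℕ) (k : ℂ) (hk : k ≠ 0) :
    lfun a k - lfun b k =
      (ω ^ a - ω ^ b) * (ω ^ (a + b) * k ^ 2 - 1) /
        ((Real.sqrt 3 : ℂ) * (ω ^ (a + b) * k)) := by
  have h1 : ω ^ a ≠ 0 := pow_ne_zero _ hω0
  have h2 : ω ^ b ≠ 0 := pow_ne_zero _ hω0
  unfold lfun
  rw [pow_add]
  field_simp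
  ring

lemma det_eq_zero_iff (k : ℂ) (hk : k ≠ 0) : (Pmat k).det = 0 ↔ k ^ 6 = 1 := by
  have hdet : (Pmat k).det =
      (lfun 2 k - lfun 1 k) * ((lfun 3 k - lfun 1 k) * (lfun 3 k - lfun 2 k)) := by
    simp [Pmat, Matrix.det_fin_three]
    ring
  have hzero : ∀ a b : ℕ, ω ^ a - ω ^ b ≠ 0 →
      (lfun a k - lfun b k = 0 ↔ ω ^ (a + b) * k ^ 2 = 1) := by
    intro a b hab
    rw [lfun_sub a b k hk, div_eq_zero_iff, mul_eq_zero]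
    have hden : ((Real.sqrt 3 : ℝ) : ℂ) * (ω ^ (a + b) * k) ≠ 0 :=
      mul_ne_zero hs0 (mul_ne_zero (pow_ne_zero _ hω0) hk)
    simp [hden, hab, sub_eq_zero]
  have h21 : ω ^ 2 - ω ^ 1 ≠ 0 := by
    rw [sub_ne_zero]; simpa using hω2neω
  have h31 : ω ^ 3 - ω ^ 1 ≠ 0 := by
    rw [sub_ne_zero, hω3]; simpa using fun h => hω1 h.symm
  have h32 : ω ^ 3 - ω ^ 2 ≠ 0 := by
    rw [sub_ne_zero, hω3]; exact fun h => hω2ne1 h.symm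
  rw [hdet, mul_eq_zero, mul_eq_zero, hzero 2 1 h21, hzero 3 1 h31, hzero 3 2 h32]
  constructor
  · rintro (h | h | h)
    · linear_combination (k ^ 4 + k ^ 2 + 1) * h - (k ^ 6 + k ^ 4 + k ^ 2) * hω3
    · linear_combination (ω ^ 8 * k ^ 4 + ω ^ 4 * k ^ 2 + 1) * h -
        k ^ 6 * (ω ^ 9 + ω ^ 6 + ω ^ 3 + 1) * hω3
    · linear_combination (ω ^ 10 * k ^ 4 + ω ^ 5 * k ^ 2 + 1) * h -
        k ^ 6 * (ω ^ 12 + ω ^ 9 + ω ^ 6 + ω ^ 3 + 1) * hω3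
  · intro h6
    have hfac : (k ^ 2 - 1) * ((k ^ 2 - ω) * (k ^ 2 - ω ^ 2)) = 0 := by
      linear_combination h6 + (k ^ 2 - k ^ 4) * hsum + (k ^ 2 - 1) * hω3
    rcases mul_eq_zero.1 hfac with h | h
    · left; linear_combination ω ^ 3 * h + hω3
    · rcases mul_eq_zero.1 h with h | h
      · right; right; linear_combination ω ^ 5 * h + (ω ^ 3 + 1) * hω3
      · right; left; linear_combination ω ^ 4 * h + (ω ^ 3 + 1) * hω3

lemma sixth_root_iff (k : ℂ) : k ^ 6 = 1 ↔
    ∃ j : ℕ, 1 ≤ j ∧ j ≤ 6 ∧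
      k = Complex.exp (Real.pi * Complex.I * ((j : ℂ) - 1) / 3) := by
  constructor
  · intro h
    obtain ⟨i, hi, hik⟩ :=
      (Complex.isPrimitiveRoot_exp 6 (by norm_num)).eq_pow_of_pow_eq_one h
    refine ⟨i + 1, by omega, by omega, ?_⟩
    rw [← hik, ← Complex.exp_nat_mul]
    congr 1
    push_cast
    ring
  · rintro ⟨j, hj1, hj6, rfl⟩
    rw [← Complex.exp_nat_mul]
    have h : ((6 : ℕ) : ℂ) * (Real.pi * Complex.I * ((j : ℂ) - 1) / 3) =
        (((j : ℤ) - 1) : ℤ) * (2 * Real.pi * Complex.I) := by push_cast; ring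
    rw [h, Complex.exp_int_mul_two_pi_mul_I]

/-- For `k ≠ 0`, `P(k)` is invertible iff `k⁶ ≠ 1`; equivalently, `det P(k) = 0`
iff `k` is one of the sixth roots of unity `ϰ_j = e^{πi(j-1)/3}`, `j = 1,…,6`. -/
theorem Pmat_invertible_iff (k : ℂ) (hk : k ≠ 0) :
    (IsUnit (Pmat k) ↔ k ^ 6 ≠ 1) ∧
    ((Pmat k).det = 0 ↔
      ∃ j : ℕ, 1 ≤ j ∧ j ≤ 6 ∧
        k = Complex.exp (Real.pi * Complex.I * ((j : ℂ) - 1) / 3)) := by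
  have hdi := det_eq_zero_iff k hk
  constructor
  · rw [Matrix.isUnit_iff_isUnit_det, isUnit_iff_ne_zero, ne_eq, hdi]
  · rw [hdi, sixth_root_iff]
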